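/- Let T be a densely defined right-linear operator on a Hilbert module V over ℝ_d, with adjoint T* defined via Sc⟨T* w, v⟩ = Sc⟨w, T v⟩. Then T* is right-linear, its domain equals { w : ∃ v_w, ⟨v_w, v⟩ = ⟨w, T v⟩ for all v ∈ dom(T) }, and ⟨T* w, v⟩ = ⟨w, T v⟩ for all v ∈ dom(T), w ∈ dom(T*), where ⟨·,·⟩ is the full ℝ_d-valued inner product. -/

import Mathlib

/-!
Every real-valued identity `⟪u, v⟫ = ⟪w, T v⟫` can be tested against `v·b` for all `b ∈ ℝ_d`, since
`dom T` is a right submodule and `T` is right-linear. Through `Sc (⟨u, v⟩ b) = Sc ⟨u, v b⟩` this gives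
`Sc ((⟨u, v⟩ - ⟨w, T v⟩) b) = 0` for every `b`, and nondegeneracy of `(a, b) ↦ Sc (a b)` upgrades the
scalar identity to the full `ℝ_d`-valued one. Right-linearity of `T*` then follows from
`⟨u a, v⟩ = ā ⟨u, v⟩`.
-/

noncomputable section

open scoped BigOperators

/-- The negative-definite quadratic form on `Fin d → ℝ`, so that the Clifford
algebra generators satisfy `eᵢ² = -1` and anticommute. -/
def negQ (d : ℕ) : QuadraticForm ℝ (Fin d → ℝ) :=
  QuadraticMap.weightedSumSquares ℝ (fun _ : Fin d => (-1 : ℝ))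

/-- The real Clifford algebra ℝ_d. -/
abbrev Cl (d : ℕ) : Type := CliffordAlgebra (negQ d)

/-- The paravector `s₀ + s₁e₁ + ⋯ + s_d e_d`. -/
def pv {d : ℕ} (s₀ : ℝ) (v : Fin d → ℝ) : Cl d :=
  algebraMap ℝ (Cl d) s₀ + CliffordAlgebra.ι (negQ d) v

/-- The Clifford conjugate `s₀ - s₁e₁ - ⋯ - s_d e_d` of a paravector. -/
def pvConj {d : ℕ} (s₀ : ℝ) (v : Fin d → ℝ) : Cl d :=
  algebraMap ℝ (Cl d) s₀ - CliffordAlgebra.ι (negQ d) v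

/-- The squared modulus `s₀² + s₁² + ⋯ + s_d²` of a paravector. -/
def pvNormSq {d : ℕ} (s₀ : ℝ) (v : Fin d → ℝ) : ℝ := s₀ ^ 2 + ∑ i, v i ^ 2

/-- Right multiplication `v ↦ v·a` on a right Clifford module `V`. -/
def rmul {d : ℕ} {V : Type*} [AddCommGroup V] [Module (Cl d)ᵐᵒᵖ V]
    (v : V) (a : Cl d) : V := MulOpposite.op a • v

/-- A right-linear operator `T : dom(T) ⊆ V → V` on a right Clifford module. -/
structure RightLinearOp (d : ℕ) (V : Type*) [AddCommGroup V]
    [Module (Cl d)ᵐᵒᵖ V] where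
  dom : Set V
  toFun : V → V
  zero_mem : (0 : V) ∈ dom
  add_mem : ∀ ⦃v w : V⦄, v ∈ dom → w ∈ dom → v + w ∈ dom
  smul_mem : ∀ (a : (Cl d)ᵐᵒᵖ) ⦃v : V⦄, v ∈ dom → a • v ∈ dom
  map_add' : ∀ ⦃v w : V⦄, v ∈ dom → w ∈ dom → toFun (v + w) = toFun v + toFun w
  map_smul' : ∀ (a : (Cl d)ᵐᵒᵖ) ⦃v : V⦄, v ∈ dom → toFun (a • v) = a • toFun v

namespace RightLinearOp

variable {d : ℕ} {V : Type*} [NormedAddCommGroup V] [NormedSpace ℝ V]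
  [Module (Cl d)ᵐᵒᵖ V] [IsScalarTower ℝ (Cl d)ᵐᵒᵖ V]

/-- `T` is a closed operator: its graph is closed in `V × V`. -/
def IsClosedOp (T : RightLinearOp d V) : Prop :=
  IsClosed {p : V × V | p.1 ∈ T.dom ∧ p.2 = T.toFun p.1}

/-- The domain of `T²`. -/
def dom2 (T : RightLinearOp d V) : Set V := {v | v ∈ T.dom ∧ T.toFun v ∈ T.dom}

/-- The operator `Q_s[T] = T² - 2s₀T + |s|²`, as a function (to be used on `dom2`);
it depends only on `s₀` and `|s|²` (denoted `nsq`). -/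
def qs (T : RightLinearOp d V) (s₀ nsq : ℝ) (v : V) : V :=
  T.toFun (T.toFun v) - (2 * s₀) • T.toFun v + nsq • v

/-- `Qi` is a bounded, everywhere defined, two-sided inverse of
`Q_s[T] : dom(T²) → V`. -/
def IsQInv (T : RightLinearOp d V) (s₀ nsq : ℝ) (Qi : V →L[ℝ] V) : Prop :=
  (∀ v : V, Qi v ∈ T.dom2) ∧
  (∀ v ∈ T.dom2, Qi (T.qs s₀ nsq v) = v) ∧
  (∀ v : V, T.qs s₀ nsq (Qi v) = v)

/-- The paravector `s = (s₀, sv)` belongs to the `S`-resolvent set of `T`,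
i.e. `Q_s[T]⁻¹ ∈ B(V)`. -/
def InRhoS (T : RightLinearOp d V) (s₀ : ℝ) (sv : Fin d → ℝ) : Prop :=
  ∃ Qi : V →L[ℝ] V, T.IsQInv s₀ (pvNormSq s₀ sv) Qi

end RightLinearOp

/-- Clifford conjugation on ℝ_d (composite of involution and reversal). -/
def clConj {d : ℕ} (a : Cl d) : Cl d :=
  CliffordAlgebra.reverse (CliffordAlgebra.involute a)

theorem eq_of_forall_map_mul_eq {A M : Type*} [Ring A] [AddCommGroup M] (Sc : A →+ M)
    (hrec : ∀ a : A, (∀ b : A, Sc (a * b) = 0) → a = 0) {a c : A}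
    (h : ∀ b : A, Sc (a * b) = Sc (c * b)) : a = c :=
  sub_eq_zero.mp <| hrec _ fun b => by rw [sub_mul, map_sub, h, sub_self]

namespace RightLinearOp

variable {d : ℕ} {V : Type*} [NormedAddCommGroup V] [InnerProductSpace ℝ V]
  [Module (Cl d)ᵐᵒᵖ V] {cip : V → V → Cl d} {Sc : Cl d →ₗ[ℝ] ℝ}

theorem cip_eq_of_inner_eq (T : RightLinearOp d V)
    (hsmul₂ : ∀ (u w : V) (a : Cl d), cip u (MulOpposite.op a • w) = cip u w * a)
    (hSc : ∀ u w : V, (inner ℝ u w : ℝ) = Sc (cip u w))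
    (hrec : ∀ a : Cl d, (∀ b : Cl d, Sc (a * b) = 0) → a = 0) {w u : V}
    (h : ∀ v ∈ T.dom, (inner ℝ u v : ℝ) = inner ℝ w (T.toFun v)) :
    ∀ v ∈ T.dom, cip u v = cip w (T.toFun v) := by
  intro v hv
  refine eq_of_forall_map_mul_eq Sc.toAddMonoidHom hrec fun b => ?_
  have hvb := h _ (T.smul_mem (MulOpposite.op b) hv)
  rwa [hSc, hSc, T.map_smul' _ hv, hsmul₂, hsmul₂] at hvb

theorem inner_rmul_eq_of_cip_eq (T : RightLinearOp d V)
    (hsmul₁ : ∀ (u w : V) (a : Cl d), cip (MulOpposite.op a • u) w = clConj a * cip u w)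
    (hSc : ∀ u w : V, (inner ℝ u w : ℝ) = Sc (cip u w)) (a : Cl d) {w u : V}
    (h : ∀ v ∈ T.dom, cip u v = cip w (T.toFun v)) :
    ∀ v ∈ T.dom, (inner ℝ (MulOpposite.op a • u) v : ℝ)
      = inner ℝ (MulOpposite.op a • w) (T.toFun v) := by
  intro v hv
  rw [hSc, hSc, hsmul₁, hsmul₁, h v hv]

end RightLinearOp

open RightLinearOp in
theorem adjoint_right_linear_and_full_inner {d : ℕ} {V : Type*}
    [NormedAddCommGroup V] [InnerProductSpace ℝ V]
    [Module (Cl d)ᵐᵒᵖ V]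
    (cip : V → V → Cl d) (Sc : Cl d →ₗ[ℝ] ℝ)
    -- the full inner product is right-linear in the second argument:
    (hsmul₂ : ∀ (u w : V) (a : Cl d), cip u (MulOpposite.op a • w) = cip u w * a)
    (hsmul₁ : ∀ (u w : V) (a : Cl d),
      cip (MulOpposite.op a • u) w = clConj a * cip u w)
    -- the scalar part of the full inner product is the real inner product:
    (hSc : ∀ u w : V, (inner ℝ u w : ℝ) = Sc (cip u w))
    -- components can be recovered from the scalar part:
    (hrec : ∀ a : Cl d, (∀ b : Cl d, Sc (a * b) = 0) → a = 0)
    (T : RightLinearOp d V) :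
    -- the domain of `T*` is characterized via the full inner product:
    ({w : V | ∃ u : V, ∀ v ∈ T.dom, (inner ℝ u v : ℝ) = inner ℝ w (T.toFun v)}
      = {w : V | ∃ u : V, ∀ v ∈ T.dom, cip u v = cip w (T.toFun v)}) ∧
    -- `⟨T*w, v⟩ = ⟨w, Tv⟩` with the full inner product:
    (∀ w u : V, (∀ v ∈ T.dom, (inner ℝ u v : ℝ) = inner ℝ w (T.toFun v)) →
      ∀ v ∈ T.dom, cip u v = cip w (T.toFun v)) ∧
    -- `T*` is right-linear: if `u = T*w` then `u·a = T*(w·a)`: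
    (∀ (a : Cl d) (w u : V),
      (∀ v ∈ T.dom, (inner ℝ u v : ℝ) = inner ℝ w (T.toFun v)) →
      ∀ v ∈ T.dom, (inner ℝ (MulOpposite.op a • u) v : ℝ)
        = inner ℝ (MulOpposite.op a • w) (T.toFun v)) := by
  have hcip := fun w u => T.cip_eq_of_inner_eq hsmul₂ hSc hrec (w := w) (u := u)
  refine ⟨Set.ext fun w => ⟨fun ⟨u, hu⟩ => ⟨u, hcip w u hu⟩, fun ⟨u, hu⟩ => ⟨u, ?_⟩⟩, hcip, ?_⟩
  · intro v hv
    rw [hSc, hSc, hu v hv]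
  · intro a w u hu
    exact T.inner_rmul_eq_of_cip_eq hsmul₁ hSc a (hcip w u hu)
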